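/- arXiv:2604.07640 — 2 statements merged into one kernel-verified Lean document; each statement's English description precedes it below -/
import Mathlib

section
/- Let X ≥ 0 and Y ≥ 0 be independent random variables. Suppose P(X > x) = x^{-α} L(x) for some α > 0 and slowly varying function L, and E[Y^{α+δ}] < ∞ for some δ > 0. Then P(XY > x) ~ E[Y^α] · P(X > x) as x → ∞ (Breiman's lemma). -/
open MeasureTheory ProbabilityTheory Real Filter

lemma exists_two_pow_between {s : ℝ} (hs : 1 ≤ s) :
    ∃ k : ℕ, s ≤ 2 ^ k ∧ (2:ℝ) ^ k ≤ 4 * s := by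
  have hs0 : 0 ≤ s := by linarith
  set n := ⌈s⌉₊ with hn
  have hn0 : n ≠ 0 := by
    have : 1 ≤ n := Nat.one_le_ceil_iff.mpr (by linarith)
    omega
  refine ⟨Nat.log 2 n + 1, ?_, ?_⟩
  · have h1 : (n : ℝ) < 2 ^ (Nat.log 2 n + 1) := by
      exact_mod_cast Nat.lt_pow_succ_log_self (by norm_num) n
    have h2 : s ≤ (n : ℝ) := Nat.le_ceil s
    linarith
  · have h2 : (2:ℝ) ^ (Nat.log 2 n) ≤ n := by
      exact_mod_cast Nat.pow_log_le_self 2 hn0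
    have h3 : (n : ℝ) < s + 1 := Nat.ceil_lt_add_one hs0
    have : (2:ℝ) ^ (Nat.log 2 n + 1) = 2 * 2 ^ (Nat.log 2 n) := by ring
    rw [this]
    nlinarith

lemma potter_bound (φ : ℝ → ℝ) (hanti : Antitone φ) (hpos : ∀ x, 0 < x → 0 < φ x)
    (hle : ∀ x, φ x ≤ 1) (β : ℝ) (hβ : 0 < β) (x₁ : ℝ) (hx₁ : 1 ≤ x₁)
    (hup : ∀ x, x₁ ≤ x → φ (x / 2) ≤ 2 ^ β * φ x)
    (hdown : ∀ x, x₁ ≤ x → 2 ^ (-β) * φ x ≤ φ (2 * x)) :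
    ∃ C, 0 < C ∧ ∀ x, x₁ ≤ x → ∀ s, 1 ≤ s → φ (x / s) ≤ C * s ^ β * φ x := by
  have hx₁0 : 0 < x₁ := by linarith
  have h2β : (0:ℝ) < 2 ^ β := rpow_pos_of_pos two_pos β
  have h2β' : (0:ℝ) < 2 ^ (-β) := rpow_pos_of_pos two_pos (-β)
  -- upper chain
  have claim1 : ∀ k : ℕ, ∀ x : ℝ, 2 ^ k * x₁ ≤ x → φ (x / 2 ^ k) ≤ (2 ^ β) ^ k * φ x := by
    intro k
    induction k with
    | zero => intro x hx; simp
    | succ k ih =>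
      intro x hx
      have hpk : (1:ℝ) ≤ 2 ^ (k+1) := one_le_pow₀ (by norm_num)
      have hxx₁ : x₁ ≤ x := le_trans (by nlinarith) hx
      have hx2 : 2 ^ k * x₁ ≤ x / 2 := by
        rw [le_div_iff₀ two_pos]
        calc 2 ^ k * x₁ * 2 = 2 ^ (k+1) * x₁ := by ring
        _ ≤ x := hx
      have h1 := ih (x / 2) hx2
      have h2 := hup x hxx₁
      have heq : x / 2 / 2 ^ k = x / 2 ^ (k+1) := by
        rw [div_div]; ring_nf
      rw [heq] at h1
      calc φ (x / 2 ^ (k+1)) ≤ (2 ^ β) ^ k * φ (x / 2) := h1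
        _ ≤ (2 ^ β) ^ k * (2 ^ β * φ x) := by
            exact mul_le_mul_of_nonneg_left h2 (by positivity)
        _ = (2 ^ β) ^ (k+1) * φ x := by ring
  -- lower chain
  have claim2 : ∀ k : ℕ, ∀ x : ℝ, x₁ ≤ x → (2 ^ (-β)) ^ k * φ x ≤ φ (2 ^ k * x) := by
    intro k
    induction k with
    | zero => intro x hx; simp
    | succ k ih =>
      intro x hx
      have h2x : x₁ ≤ 2 * x := by linarith
      have h1 := ih (2 * x) h2x
      have h2 := hdown x hx
      have heq : 2 ^ k * (2 * x) = 2 ^ (k+1) * x := by ring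
      rw [heq] at h1
      calc (2 ^ (-β)) ^ (k+1) * φ x = (2 ^ (-β)) ^ k * (2 ^ (-β) * φ x) := by ring
        _ ≤ (2 ^ (-β)) ^ k * φ (2 * x) := mul_le_mul_of_nonneg_left h2 (by positivity)
        _ ≤ φ (2 ^ (k+1) * x) := h1
  -- rpow/pow conversions
  have hconv : ∀ k : ℕ, ((2:ℝ) ^ β) ^ k = ((2:ℝ) ^ k) ^ β := by
    intro k
    rw [← rpow_natCast ((2:ℝ) ^ β) k, ← rpow_natCast (2:ℝ) k,
        ← rpow_mul (by norm_num), ← rpow_mul (by norm_num), mul_comm]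
  have hconv' : ∀ k : ℕ, ((2:ℝ) ^ (-β)) ^ k = ((2:ℝ) ^ k) ^ (-β) := by
    intro k
    rw [← rpow_natCast ((2:ℝ) ^ (-β)) k, ← rpow_natCast (2:ℝ) k,
        ← rpow_mul (by norm_num), ← rpow_mul (by norm_num), mul_comm]
  -- lower bound
  have lowbd : ∀ x, x₁ ≤ x → (4 * x / x₁) ^ (-β) * φ x₁ ≤ φ x := by
    intro x hx
    have hx0 : 0 < x := lt_of_lt_of_le hx₁0 hx
    have hs : 1 ≤ x / x₁ := (one_le_div hx₁0).mpr hx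
    obtain ⟨k, hk1, hk2⟩ := exists_two_pow_between hs
    have hxle : x ≤ 2 ^ k * x₁ := by
      rw [div_le_iff₀ hx₁0] at hk1; linarith
    have h1 : φ (2 ^ k * x₁) ≤ φ x := hanti hxle
    have h2 := claim2 k x₁ le_rfl
    have h3 : (4 * x / x₁) ^ (-β) ≤ ((2:ℝ) ^ k) ^ (-β) := by
      apply rpow_le_rpow_of_nonpos (by positivity) ?_ (by linarith)
      calc (2:ℝ) ^ k ≤ 4 * (x / x₁) := hk2
        _ = 4 * x / x₁ := by ring
    calc (4 * x / x₁) ^ (-β) * φ x₁ ≤ ((2:ℝ) ^ k) ^ (-β) * φ x₁ :=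
          mul_le_mul_of_nonneg_right h3 (hpos x₁ hx₁0).le
      _ = (2 ^ (-β)) ^ k * φ x₁ := by rw [hconv']
      _ ≤ φ (2 ^ k * x₁) := h2
      _ ≤ φ x := h1
  -- constant
  set C := max ((4:ℝ) ^ β) (16 ^ β / φ x₁) with hC
  have hφx₁ : 0 < φ x₁ := hpos x₁ hx₁0
  have hCpos : 0 < C := lt_of_lt_of_le (rpow_pos_of_pos (by norm_num) β) (le_max_left _ _)
  refine ⟨C, hCpos, fun x hx s hs => ?_⟩
  have hx0 : 0 < x := lt_of_lt_of_le hx₁0 hx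
  have hs0 : 0 < s := by linarith
  have hsβ : 0 < s ^ β := rpow_pos_of_pos hs0 β
  by_cases hcase : 4 * s * x₁ ≤ x
  · obtain ⟨k, hk1, hk2⟩ := exists_two_pow_between hs
    have hkx : 2 ^ k * x₁ ≤ x := by nlinarith
    have h1 : φ (x / s) ≤ φ (x / 2 ^ k) := by
      apply hanti
      apply div_le_div_of_nonneg_left hx0.le hs0 hk1
    have h2 := claim1 k x hkx
    have h3 : ((2:ℝ) ^ k) ^ β ≤ (4 * s) ^ β :=
      rpow_le_rpow (by positivity) hk2 hβ.le
    have h4 : ((4:ℝ) * s) ^ β = 4 ^ β * s ^ β := mul_rpow (by norm_num) hs0.le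
    have hφx : 0 ≤ φ x := (hpos x hx0).le
    calc φ (x / s) ≤ (2 ^ β) ^ k * φ x := le_trans h1 h2
      _ = ((2:ℝ) ^ k) ^ β * φ x := by rw [hconv]
      _ ≤ (4 ^ β * s ^ β) * φ x := by rw [← h4]; exact mul_le_mul_of_nonneg_right h3 hφx
      _ ≤ C * s ^ β * φ x := by
          have : (4:ℝ) ^ β ≤ C := le_max_left _ _
          exact mul_le_mul_of_nonneg_right (mul_le_mul_of_nonneg_right this hsβ.le) hφx
  · push_neg at hcase
    have hslow : x / (4 * x₁) ≤ s := by
      rw [div_le_iff₀ (by positivity)]; nlinarith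
    have h1 : φ (x / s) ≤ 1 := hle _
    have h2 : (x / (4 * x₁)) ^ β ≤ s ^ β := rpow_le_rpow (by positivity) hslow hβ.le
    have h3 := lowbd x hx
    have key : (1/16:ℝ) ^ β * φ x₁ ≤ s ^ β * φ x := by
      have hxne : x ≠ 0 := ne_of_gt hx0
      have hx₁ne : x₁ ≠ 0 := ne_of_gt hx₁0
      have e0 : (x / (4 * x₁)) ^ β * (4 * x / x₁) ^ (-β) = (1/16:ℝ) ^ β := by
        rw [rpow_neg (by positivity), ← div_eq_mul_inv,
            ← div_rpow (by positivity) (by positivity)]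
        congr 1
        field_simp
        ring
      have e1 : (x / (4 * x₁)) ^ β * ((4 * x / x₁) ^ (-β) * φ x₁) = (1/16:ℝ) ^ β * φ x₁ := by
        rw [← mul_assoc, e0]
      calc (1/16:ℝ) ^ β * φ x₁ = (x / (4 * x₁)) ^ β * ((4 * x / x₁) ^ (-β) * φ x₁) := e1.symm
        _ ≤ s ^ β * ((4 * x / x₁) ^ (-β) * φ x₁) := by
            exact mul_le_mul_of_nonneg_right h2 (by positivity)
        _ ≤ s ^ β * φ x := mul_le_mul_of_nonneg_left h3 hsβ.le
    have hC2 : 16 ^ β / φ x₁ ≤ C := le_max_right _ _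
    have e2 : (16:ℝ) ^ β * (1/16:ℝ) ^ β = 1 := by
      rw [← mul_rpow (by norm_num) (by norm_num)]
      norm_num
    have h16 : (0:ℝ) < 16 ^ β := rpow_pos_of_pos (by norm_num) β
    calc φ (x / s) ≤ 1 := h1
      _ = (16 ^ β / φ x₁) * ((1/16:ℝ) ^ β * φ x₁) := by
          field_simp
          nlinarith
      _ ≤ C * ((1/16:ℝ) ^ β * φ x₁) := by
          apply mul_le_mul_of_nonneg_right hC2
          positivity
      _ ≤ C * (s ^ β * φ x) := mul_le_mul_of_nonneg_left key hCpos.le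
      _ = C * s ^ β * φ x := by ring

/-- Breiman's lemma: if X ≥ 0 has regularly varying tail P(X > x) = x^{-α} L(x) with L
    slowly varying, Y ≥ 0 is independent of X with E[Y^{α+δ}] < ∞ for some δ > 0, then
    P(XY > x) ~ E[Y^α] P(X > x) as x → ∞. -/
theorem stmt2 {Ω : Type*} [MeasureSpace Ω] [IsProbabilityMeasure (ℙ : Measure Ω)]
    (X Y : Ω → ℝ) (hXm : Measurable X) (hYm : Measurable Y)
    (hXnn : ∀ ω, 0 ≤ X ω) (hYnn : ∀ ω, 0 ≤ Y ω)
    (hindep : IndepFun X Y ℙ)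
    (α : ℝ) (hα : 0 < α) (L : ℝ → ℝ) (hLpos : ∀ x > 0, 0 < L x)
    (hslow : ∀ t > 0, Tendsto (fun x => L (t * x) / L x) atTop (nhds 1))
    (htail : ∀ x > 0, (ℙ {ω | X ω > x}).toReal = x ^ (-α) * L x)
    (δ : ℝ) (hδ : 0 < δ)
    (hmom : Integrable (fun ω => Y ω ^ (α + δ)) ℙ) :
    Tendsto (fun x => (ℙ {ω | X ω * Y ω > x}).toReal / (ℙ {ω | X ω > x}).toReal)
      atTop (nhds (∫ ω, Y ω ^ α ∂ℙ)) := by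
  set φ : ℝ → ℝ := fun u => (ℙ {ω | X ω > u}).toReal with hφdef
  have hanti : Antitone φ := by
    intro u v huv
    exact ENNReal.toReal_mono (measure_ne_top _ _)
      (measure_mono (fun ω h => lt_of_le_of_lt huv h))
  have hφle : ∀ u, φ u ≤ 1 := by
    intro u
    simpa using ENNReal.toReal_mono ENNReal.one_ne_top prob_le_one
  have hφpos : ∀ u, 0 < u → 0 < φ u := by
    intro u hu
    have : φ u = u ^ (-α) * L u := htail u hu
    rw [this]
    exact mul_pos (rpow_pos_of_pos hu _) (hLpos u hu)
  have hφnn : ∀ u, 0 ≤ φ u := fun u => ENNReal.toReal_nonneg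
  have hφmeas : Measurable φ := hanti.measurable
  -- ratio limit (regular variation of the tail)
  have hA : ∀ t : ℝ, 0 < t → Tendsto (fun x => φ (t * x) / φ x) atTop (nhds (t ^ (-α))) := by
    intro t ht
    have hev : (fun x => t ^ (-α) * (L (t * x) / L x)) =ᶠ[atTop]
        (fun x => φ (t * x) / φ x) := by
      filter_upwards [eventually_gt_atTop 0] with x hx
      have htx : 0 < t * x := mul_pos ht hx
      have h1 : φ (t * x) = (t * x) ^ (-α) * L (t * x) := htail _ htx
      have h2 : φ x = x ^ (-α) * L x := htail _ hx
      have h3 : (t * x) ^ (-α) = t ^ (-α) * x ^ (-α) := mul_rpow ht.le hx.le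
      have hxne : x ^ (-α) ≠ 0 := ne_of_gt (rpow_pos_of_pos hx _)
      have hLne : L x ≠ 0 := ne_of_gt (hLpos x hx)
      rw [h1, h2, h3]
      field_simp
    have h := (hslow t ht).const_mul (t ^ (-α))
    rw [mul_one] at h
    exact h.congr' hev
  -- one-step Potter estimates
  set β := α + δ with hβdef
  have hβ : 0 < β := by positivity
  have hαβ : α < β := by simp only [hβdef]; linarith
  have hup_ev : ∀ᶠ x in atTop, φ (x / 2) ≤ 2 ^ β * φ x := by
    have h2 : ((2:ℝ)⁻¹) ^ (-α) = 2 ^ α := by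
      rw [inv_rpow (by norm_num), ← rpow_neg (by norm_num), neg_neg]
    have hlt : ((2:ℝ)⁻¹) ^ (-α) < 2 ^ β := by
      rw [h2]; exact rpow_lt_rpow_of_exponent_lt one_lt_two hαβ
    have hev := (hA 2⁻¹ (by norm_num)).eventually_lt_const hlt
    filter_upwards [hev, eventually_gt_atTop 0] with x h1 hx0
    have h3 := (div_le_iff₀ (hφpos x hx0)).mp h1.le
    calc φ (x / 2) = φ (2⁻¹ * x) := by rw [inv_mul_eq_div]
      _ ≤ 2 ^ β * φ x := h3
  have hdown_ev : ∀ᶠ x in atTop, 2 ^ (-β) * φ x ≤ φ (2 * x) := by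
    have hlt : (2:ℝ) ^ (-β) < 2 ^ (-α) :=
      rpow_lt_rpow_of_exponent_lt one_lt_two (by linarith)
    have hev := (hA 2 (by norm_num)).eventually_const_le hlt
    filter_upwards [hev, eventually_gt_atTop 0] with x h1 hx0
    exact (le_div_iff₀ (hφpos x hx0)).mp h1
  obtain ⟨x₀, hx₀⟩ := eventually_atTop.mp ((hup_ev.and hdown_ev).and (eventually_ge_atTop 1))
  set x₁ := max x₀ 1 with hx₁def
  have hx₁1 : 1 ≤ x₁ := le_max_right _ _
  have hx₁0 : 0 < x₁ := lt_of_lt_of_le one_pos hx₁1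
  have hball : ∀ x, x₁ ≤ x → (φ (x / 2) ≤ 2 ^ β * φ x ∧ 2 ^ (-β) * φ x ≤ φ (2 * x)) :=
    fun x hx => (hx₀ x (le_trans (le_max_left _ _) hx)).1
  obtain ⟨C, hC0, hpotter⟩ := potter_bound φ hanti hφpos hφle β hβ x₁ hx₁1
    (fun x hx => (hball x hx).1) (fun x hx => (hball x hx).2)
  -- the integrand
  set G : ℝ → ℝ → ℝ := fun x b => if 0 < b then φ (x / b) else 0 with hG
  have hGnn : ∀ x b, 0 ≤ G x b := by
    intro x b
    by_cases hb : 0 < b <;> simp [hG, hb, hφnn]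
  have hGmeas : ∀ x, Measurable (G x) := by
    intro x
    apply Measurable.ite
    · exact measurableSet_Ioi
    · exact hφmeas.comp (measurable_const.div measurable_id)
    · exact measurable_const
  -- representation of the numerator
  have hkey : ∀ x : ℝ, 0 < x →
      ℙ {ω | X ω * Y ω > x} = ∫⁻ ω, ENNReal.ofReal (G x (Y ω)) ∂ℙ := by
    intro x hx
    have hmap : Measure.map (fun ω => (Y ω, X ω)) ℙ
        = (Measure.map Y ℙ).prod (Measure.map X ℙ) :=
      (indepFun_iff_map_prod_eq_prod_map_map hYm.aemeasurable hXm.aemeasurable).mp hindep.symm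
    have hsm : MeasurableSet {p : ℝ × ℝ | p.2 * p.1 > x} :=
      (measurable_snd.mul measurable_fst) measurableSet_Ioi
    have h1 : ℙ {ω | X ω * Y ω > x}
        = Measure.map (fun ω => (Y ω, X ω)) ℙ {p : ℝ × ℝ | p.2 * p.1 > x} := by
      rw [Measure.map_apply (hYm.prodMk hXm) hsm]
      rfl
    rw [h1, hmap, Measure.prod_apply hsm]
    have h2 : ∀ b : ℝ, (Measure.map X ℙ) (Prod.mk b ⁻¹' {p : ℝ × ℝ | p.2 * p.1 > x})
        = ENNReal.ofReal (G x b) := by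
      intro b
      have hpre : Prod.mk b ⁻¹' {p : ℝ × ℝ | p.2 * p.1 > x} = {a : ℝ | a * b > x} := rfl
      have hms : MeasurableSet {a : ℝ | a * b > x} :=
        (measurable_mul_const b) measurableSet_Ioi
      rw [hpre, Measure.map_apply hXm hms]
      by_cases hb : 0 < b
      · have hset : (X ⁻¹' {a | a * b > x}) = {ω | X ω > x / b} := by
          ext ω
          simp only [Set.mem_preimage, Set.mem_setOf_eq]
          exact (div_lt_iff₀ hb).symm
        rw [hset]
        simp only [hG, if_pos hb]
        exact (ENNReal.ofReal_toReal (measure_ne_top _ _)).symm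
      · have hset : (X ⁻¹' {a | a * b > x}) = ∅ := by
          ext ω
          simp only [Set.mem_preimage, Set.mem_setOf_eq, Set.mem_empty_iff_false, iff_false,
            not_lt]
          push_neg at hb
          nlinarith [hXnn ω]
        rw [hset]
        simp [hG, hb]
    simp_rw [h2]
    rw [lintegral_map (hGmeas x).ennreal_ofReal hYm]
  have hrepr : ∀ x : ℝ, 0 < x →
      (ℙ {ω | X ω * Y ω > x}).toReal = ∫ ω, G x (Y ω) ∂ℙ := by
    intro x hx
    rw [hkey x hx, integral_eq_lintegral_of_nonneg_ae
      (Eventually.of_forall (fun ω => hGnn x (Y ω)))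
      (((hGmeas x).comp hYm).aestronglyMeasurable)]
  -- eventual equality of the two expressions
  have hfineq : (fun x => (ℙ {ω | X ω * Y ω > x}).toReal / (ℙ {ω | X ω > x}).toReal)
      =ᶠ[atTop] (fun x => ∫ ω, G x (Y ω) / φ x ∂ℙ) := by
    filter_upwards [eventually_gt_atTop 0] with x hx
    rw [integral_div, ← hrepr x hx]
  rw [show (nhds (∫ ω, Y ω ^ α ∂ℙ)) = nhds (∫ ω, Y ω ^ α ∂ℙ) from rfl]
  apply Tendsto.congr' hfineq.symm
  -- dominated convergence
  set C' := max C 1 with hC'def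
  have hC'1 : 1 ≤ C' := le_max_right _ _
  have hC'C : C ≤ C' := le_max_left _ _
  have hC'0 : 0 < C' := lt_of_lt_of_le one_pos hC'1
  apply tendsto_integral_filter_of_dominated_convergence (fun ω => C' * (1 + Y ω ^ β))
  · exact Eventually.of_forall
      (fun x => (((hGmeas x).comp hYm).div_const _).aestronglyMeasurable)
  · filter_upwards [eventually_ge_atTop x₁] with x hx
    apply Eventually.of_forall
    intro ω
    have hx0 : 0 < x := lt_of_lt_of_le hx₁0 hx
    have hφx : 0 < φ x := hφpos x hx0
    have hFnn : 0 ≤ G x (Y ω) / φ x := div_nonneg (hGnn x _) hφx.le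
    rw [Real.norm_of_nonneg hFnn]
    have hyβ : 0 ≤ Y ω ^ β := rpow_nonneg (hYnn ω) β
    rcases lt_or_ge 1 (Y ω) with hy | hy
    · have h1 := hpotter x hx (Y ω) hy.le
      have hGeq : G x (Y ω) = φ (x / Y ω) := if_pos (by linarith)
      rw [hGeq, div_le_iff₀ hφx]
      calc φ (x / Y ω) ≤ C * Y ω ^ β * φ x := h1
        _ ≤ C' * (1 + Y ω ^ β) * φ x :=
            mul_le_mul_of_nonneg_right (by nlinarith) hφx.le
    · rcases (hYnn ω).lt_or_eq with hy0 | hy0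
      · have hGeq : G x (Y ω) = φ (x / Y ω) := if_pos hy0
        have hxx : x ≤ x / Y ω := by
          rw [le_div_iff₀ hy0]; nlinarith
        have h1 : φ (x / Y ω) ≤ φ x := hanti hxx
        have h2 : G x (Y ω) / φ x ≤ 1 := by
          rw [hGeq]; exact (div_le_one hφx).mpr h1
        nlinarith
      · have hGeq : G x (Y ω) = 0 := by simp [hG, ← hy0]
        rw [hGeq, zero_div]
        positivity
  · exact ((integrable_const (1:ℝ)).add hmom).const_mul C'
  · apply Eventually.of_forall
    intro ω
    rcases (hYnn ω).lt_or_eq with hy0 | hy0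
    · have hev : (fun x => φ ((Y ω)⁻¹ * x) / φ x) =ᶠ[atTop]
          (fun x => G x (Y ω) / φ x) := by
        apply Eventually.of_forall
        intro x
        simp only [hG, if_pos hy0]
        rw [inv_mul_eq_div]
      have hlim := ((hA (Y ω)⁻¹ (inv_pos.mpr hy0)).congr' hev)
      have heq : ((Y ω)⁻¹) ^ (-α) = Y ω ^ α := by
        rw [inv_rpow (hYnn ω), ← rpow_neg (hYnn ω), neg_neg]
      rwa [heq] at hlim
    · have hzero : ∀ x : ℝ, G x (Y ω) / φ x = 0 := by
        intro x; simp [hG, ← hy0]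
      have heq : (fun x => G x (Y ω) / φ x) = fun _ => (0:ℝ) := funext hzero
      rw [heq, ← hy0, Real.zero_rpow (ne_of_gt hα)]
      exact tendsto_const_nhds
end

section
/- Let X*_i, X*_j be nonnegative random variables whose joint survival is regularly varying: P(X*_i > x, X*_j > x) = L(x) x^{-κ} with L slowly varying and κ > 0. Let ε_i, ε_j be independent positive random variables, independent of (X*_i, X*_j), such that E[min(ε_i,ε_j)^{κ+δ}] < ∞ and E[max(ε_i,ε_j)^{κ+δ}] < ∞ for some δ > 0. Then P(ε_i X*_i > x, ε_j X*_j > x) is bounded between E[min(ε_i,ε_j)^κ]·L(x)x^{-κ}(1+o(1)) and E[max(ε_i,ε_j)^κ]·L(x)x^{-κ}(1+o(1)); in particular it is Θ(L(x)x^{-κ}) and the tail decay exponent κ is preserved under the multiplicative nugget. -/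
/-!
At the level of events, `min(εᵢ, εⱼ) · min(Xᵢ*, Xⱼ*) > x` implies `εᵢXᵢ* > x ∧ εⱼXⱼ* > x`, which
implies `max(εᵢ, εⱼ) · min(Xᵢ*, Xⱼ*) > x`, and `min(Xᵢ*, Xⱼ*)` has tail `L(x) x^{-κ}`. So it suffices
to prove Breiman's lemma: if `Y` has tail `T(x) = L(x) x^{-κ}` and `E > 0` is independent of `Y`
with `E[E^{κ+δ}] < ∞`, then `P(EY > x) / T(x) → E[E^κ]`.

Conditioning on `E` gives `P(EY > x) = E[T(x / E)]`, and `T(x / e) / T(x) → e^κ` for each `e` by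
slow variation. Dominated convergence applies thanks to a Potter-type bound
`T(x / e) ≤ (1 + K e^{κ+δ}) T(x)` for large `x`: slow variation gives `T(y) ≤ 2^{κ+δ} T(2y)` for
large `y`, which iterates to `T(y) ≤ (2z / y)^{κ+δ} T(z)` for `y ≤ z`; when `x / e` is not large,
one compares with a fixed `T(x₁)` instead, using `T ≤ 1`.
-/

open MeasureTheory ProbabilityTheory Real Filter Topology

def IsSlowlyVarying (L : ℝ → ℝ) : Prop :=
  ∀ t > 0, Tendsto (fun x => L (t * x) / L x) atTop (𝓝 1)

section RegularVariation

variable {T L : ℝ → ℝ} {κ δ a x₁ : ℝ}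

lemma IsSlowlyVarying.eventually_le_rpow_mul_two_mul (hT : ∀ x > 0, T x = L x * x ^ (-κ))
    (hLpos : ∀ x > 0, 0 < L x) (hL : IsSlowlyVarying L) (hδ : 0 < δ) :
    ∀ᶠ y in atTop, T y ≤ 2 ^ (κ + δ) * T (2 * y) := by
  have hlt : (2 : ℝ) ^ (-δ) < 1 := rpow_lt_one_of_one_lt_of_neg one_lt_two (neg_lt_zero.2 hδ)
  filter_upwards [(hL 2 two_pos).eventually (lt_mem_nhds hlt), eventually_gt_atTop 0]
    with y hratio hy
  have hL2 : 2 ^ (-δ) * L y ≤ L (2 * y) := ((lt_div_iff₀ (hLpos y hy)).1 hratio).le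
  have hcancel : (2 : ℝ) ^ (κ + δ) * 2 ^ (-δ) * 2 ^ (-κ) = 1 := by
    rw [← rpow_add two_pos, ← rpow_add two_pos]; norm_num
  calc T y = 2 ^ (κ + δ) * (2 ^ (-δ) * L y) * (2 ^ (-κ) * y ^ (-κ)) := by
        rw [hT y hy]; linear_combination (-(L y * y ^ (-κ))) * hcancel
    _ ≤ 2 ^ (κ + δ) * L (2 * y) * (2 ^ (-κ) * y ^ (-κ)) := by gcongr
    _ = 2 ^ (κ + δ) * T (2 * y) := by
        rw [hT (2 * y) (by positivity), mul_rpow zero_le_two hy.le]; ring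

lemma le_rpow_mul_of_doubling (hanti : Antitone T) (hTnn : ∀ y, 0 ≤ T y) (ha : 0 ≤ a)
    (hx₁ : 0 < x₁) (hdouble : ∀ y, x₁ ≤ y → T y ≤ 2 ^ a * T (2 * y)) {y z : ℝ}
    (hy : x₁ ≤ y) (hyz : y ≤ z) : T y ≤ (2 * (z / y)) ^ a * T z := by
  have hiter : ∀ n : ℕ, ∀ y, x₁ ≤ y → T y ≤ (2 ^ a) ^ n * T (2 ^ n * y) := by
    intro n
    induction n with
    | zero => simp
    | succ n ih =>
      intro y hy
      calc T y ≤ 2 ^ a * T (2 * y) := hdouble y hy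
        _ ≤ 2 ^ a * ((2 ^ a) ^ n * T (2 ^ n * (2 * y))) := by
            gcongr; exact ih _ (by linarith)
        _ = (2 ^ a) ^ (n + 1) * T (2 ^ (n + 1) * y) := by ring_nf
  have hy0 : 0 < y := hx₁.trans_le hy
  obtain ⟨n, hn, hn'⟩ := exists_nat_pow_near ((one_le_div hy0).2 hyz) one_lt_two
  calc T y ≤ (2 ^ a) ^ (n + 1) * T (2 ^ (n + 1) * y) := hiter _ y hy
    _ ≤ (2 ^ a) ^ (n + 1) * T z := by
        gcongr; exact hanti ((div_le_iff₀ hy0).1 hn'.le)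
    _ = (2 * 2 ^ n) ^ a * T z := by
        rw [← rpow_natCast, ← rpow_mul zero_le_two, mul_comm a, rpow_mul zero_le_two,
          rpow_natCast, pow_succ']
    _ ≤ (2 * (z / y)) ^ a * T z := by gcongr; exact hTnn z


lemma exists_potter_bound (hanti : Antitone T) (hTnn : ∀ y, 0 ≤ T y) (hT1 : ∀ y, T y ≤ 1)
    (ha : 0 ≤ a) (hx₁ : 0 < x₁) (hTx₁ : 0 < T x₁)
    (hdouble : ∀ y, x₁ ≤ y → T y ≤ 2 ^ a * T (2 * y)) :
    ∃ K, ∀ x, x₁ ≤ x → ∀ e > 0, T (x / e) ≤ (1 + K * e ^ a) * T x := by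
  refine ⟨2 ^ a / T x₁, fun x hx e he => ?_⟩
  have hx0 : 0 < x := hx₁.trans_le hx
  have hKe : 0 ≤ 2 ^ a / T x₁ * e ^ a * T x := by have := hTnn x; positivity
  rcases le_or_gt e 1 with he1 | he1
  · calc T (x / e) ≤ T x := hanti (le_div_self hx0.le he he1)
      _ ≤ (1 + 2 ^ a / T x₁ * e ^ a) * T x := by linarith
  have hbound : T (x / e) ≤ (2 * e) ^ a * T x / T x₁ := by
    rcases le_or_gt x₁ (x / e) with hxe | hxe
    · have h := le_rpow_mul_of_doubling hanti hTnn ha hx₁ hdouble hxe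
        (div_le_self hx0.le he1.le)
      rw [div_div_cancel₀ hx0.ne'] at h
      exact h.trans (le_div_self (by have := hTnn x; positivity) hTx₁ (hT1 x₁))
    · rw [le_div_iff₀ hTx₁]
      calc T (x / e) * T x₁ ≤ T x₁ := mul_le_of_le_one_left (hTnn _) (hT1 _)
        _ ≤ (2 * (x / x₁)) ^ a * T x := le_rpow_mul_of_doubling hanti hTnn ha hx₁ hdouble le_rfl hx
        _ ≤ (2 * e) ^ a * T x := by
            gcongr
            · exact hTnn x
            · exact (div_lt_iff₀ hx₁).2 (by rwa [div_lt_iff₀ he, mul_comm] at hxe) |>.le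
  calc T (x / e) ≤ (2 * e) ^ a * T x / T x₁ := hbound
    _ = 2 ^ a / T x₁ * e ^ a * T x := by rw [mul_rpow zero_le_two he.le]; ring
    _ ≤ (1 + 2 ^ a / T x₁ * e ^ a) * T x := by linarith [hTnn x]

lemma IsSlowlyVarying.tendsto_comp_div_div (hT : ∀ x > 0, T x = L x * x ^ (-κ))
    (hLpos : ∀ x > 0, 0 < L x) (hL : IsSlowlyVarying L) {e : ℝ} (he : 0 < e) :
    Tendsto (fun x => T (x / e) / T x) atTop (𝓝 (e ^ κ)) := by
  have h := (hL e⁻¹ (inv_pos.2 he)).const_mul (e ^ κ)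
  rw [mul_one] at h
  refine h.congr' ?_
  filter_upwards [eventually_gt_atTop 0] with x hx
  have hxe : 0 < x / e := div_pos hx he
  rw [hT x hx, hT _ hxe, div_rpow hx.le he.le, rpow_neg he.le, ← div_eq_inv_mul]
  have := hLpos x hx
  have := rpow_pos_of_pos hx (-κ)
  have := rpow_pos_of_pos he κ
  field_simp

end RegularVariation

section Breiman

variable {Ω : Type*} [MeasurableSpace Ω] (μ : Measure Ω) {E Y : Ω → ℝ}

lemma measureReal_lt_mul_eq_integral [IsFiniteMeasure μ] (hE : Measurable E) (hY : Measurable Y)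
    (hEpos : ∀ ω, 0 < E ω) (hindep : IndepFun E Y μ) (x : ℝ) :
    μ.real {ω | x < E ω * Y ω} = ∫ ω, μ.real {ω' | x / E ω < Y ω'} ∂μ := by
  have hs : MeasurableSet {p : ℝ × ℝ | x < p.1 * p.2} :=
    measurableSet_lt measurable_const (measurable_fst.mul measurable_snd)
  have hslice : ∀ ω, (μ.map Y (Prod.mk (E ω) ⁻¹' {p : ℝ × ℝ | x < p.1 * p.2})).toReal
      = μ.real {ω' | x / E ω < Y ω'} := by
    intro ω
    rw [Measure.map_apply hY (measurable_prodMk_left hs), measureReal_def]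
    congr 2
    ext ω'
    simp only [Set.mem_preimage, Set.mem_ofPred_eq, div_lt_iff₀' (hEpos ω)]
  have hlaw : μ {ω | x < E ω * Y ω}
      = ∫⁻ ω, μ.map Y (Prod.mk (E ω) ⁻¹' {p : ℝ × ℝ | x < p.1 * p.2}) ∂μ := by
    rw [← lintegral_map (measurable_measure_prodMk_left hs) hE, ← Measure.prod_apply hs,
      ← (indepFun_iff_map_prod_eq_prod_map_map hE.aemeasurable hY.aemeasurable).1 hindep,
      Measure.map_apply (hE.prodMk hY) hs]
    rfl
  have hmeas : Measurable fun ω => μ.map Y (Prod.mk (E ω) ⁻¹' {p : ℝ × ℝ | x < p.1 * p.2}) :=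
    (measurable_measure_prodMk_left hs).comp hE
  rw [measureReal_def, hlaw, ← integral_toReal hmeas.aemeasurable
    (ae_of_all _ fun ω => measure_lt_top _ _)]
  exact integral_congr_ae (ae_of_all _ hslice)

theorem tendsto_measureReal_lt_mul_div [IsProbabilityMeasure μ] (hE : Measurable E)
    (hY : Measurable Y) (hEpos : ∀ ω, 0 < E ω) (hindep : IndepFun E Y μ) {κ δ : ℝ}
    (hκ : 0 ≤ κ) (hδ : 0 < δ) {L : ℝ → ℝ} (hLpos : ∀ x > 0, 0 < L x) (hL : IsSlowlyVarying L)
    (hYtail : ∀ x > 0, μ.real {ω | x < Y ω} = L x * x ^ (-κ))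
    (hmom : Integrable (fun ω => E ω ^ (κ + δ)) μ) :
    Tendsto (fun x => μ.real {ω | x < E ω * Y ω} / (L x * x ^ (-κ))) atTop
      (𝓝 (∫ ω, E ω ^ κ ∂μ)) := by
  set T : ℝ → ℝ := fun z => μ.real {ω | z < Y ω}
  have hanti : Antitone T := fun a b hab => measureReal_mono fun ω hω => hab.trans_lt hω
  have hTnn : ∀ y, 0 ≤ T y := fun y => measureReal_nonneg
  have hT : ∀ x > 0, T x = L x * x ^ (-κ) := hYtail
  have hTpos : ∀ x > 0, 0 < T x := fun x hx => by
    rw [hT x hx]; exact mul_pos (hLpos x hx) (rpow_pos_of_pos hx _)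
  obtain ⟨x₀, hx₀⟩ := eventually_atTop.1 (hL.eventually_le_rpow_mul_two_mul hT hLpos hδ)
  set x₁ := max x₀ 1
  have hx₁ : 0 < x₁ := zero_lt_one.trans_le (le_max_right _ _)
  obtain ⟨K, hK⟩ := exists_potter_bound hanti hTnn (fun y => measureReal_le_one) (by linarith)
    hx₁ (hTpos x₁ hx₁) fun y hy => hx₀ y ((le_max_left _ _).trans hy)
  have hdom : Tendsto (fun x => ∫ ω, T (x / E ω) / T x ∂μ) atTop (𝓝 (∫ ω, E ω ^ κ ∂μ)) := by
    refine tendsto_integral_filter_of_dominated_convergence (fun ω => 1 + K * E ω ^ (κ + δ))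
      (Eventually.of_forall fun x => ?_) ?_ ((integrable_const 1).add (hmom.const_mul K))
      (ae_of_all _ fun ω => hL.tendsto_comp_div_div hT hLpos (hEpos ω))
    · exact ((hanti.measurable.comp (measurable_const.div hE)).div_const _).aestronglyMeasurable
    · filter_upwards [eventually_ge_atTop x₁] with x hx
      refine ae_of_all _ fun ω => ?_
      have hTx := hTpos x (hx₁.trans_le hx)
      rw [norm_of_nonneg (div_nonneg (hTnn _) hTx.le), div_le_iff₀ hTx]
      exact hK x hx (E ω) (hEpos ω)
  refine hdom.congr' ?_
  filter_upwards [eventually_gt_atTop 0] with x hx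
  rw [integral_div, ← measureReal_lt_mul_eq_integral μ hE hY hEpos hindep, hT x hx]

end Breiman

lemma le_liminf_and_limsup_le_of_squeeze {ι : Type*} {l : Filter ι} [l.NeBot] {f g h : ι → ℝ}
    {a b : ℝ} (hf : Tendsto f l (𝓝 a)) (hh : Tendsto h l (𝓝 b)) (hfg : ∀ᶠ i in l, f i ≤ g i)
    (hgh : ∀ᶠ i in l, g i ≤ h i) : a ≤ liminf g l ∧ limsup g l ≤ b := by
  have hbdd_le : IsBoundedUnder (· ≤ ·) l g := hh.isBoundedUnder_le.mono_le hgh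
  have hbdd_ge : IsBoundedUnder (· ≥ ·) l g := hf.isBoundedUnder_ge.mono_ge hfg
  constructor
  · rw [← hf.liminf_eq]
    exact liminf_le_liminf hfg hf.isBoundedUnder_ge hbdd_le.isCoboundedUnder_flip
  · rw [← hh.limsup_eq]
    exact limsup_le_limsup hgh hbdd_ge.isCoboundedUnder_flip hh.isBoundedUnder_le

lemma lt_mul_and_lt_mul_of_lt_min_mul_min {u v a b x : ℝ} (hu : 0 ≤ u) (hv : 0 ≤ v)
    (ha : 0 ≤ a) (hb : 0 ≤ b) (h : x < min u v * min a b) : x < u * a ∧ x < v * b :=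
  ⟨h.trans_le (mul_le_mul (min_le_left _ _) (min_le_left _ _) (le_min ha hb) hu),
    h.trans_le (mul_le_mul (min_le_right _ _) (min_le_right _ _) (le_min ha hb) hv)⟩

lemma lt_max_mul_min_of_lt_mul_of_lt_mul {u v a b x : ℝ} (ha : 0 ≤ a) (hb : 0 ≤ b)
    (hua : x < u * a) (hvb : x < v * b) : x < max u v * min a b := by
  rcases min_choice a b with hab | hab <;> rw [hab]
  · exact hua.trans_le (mul_le_mul_of_nonneg_right (le_max_left _ _) ha)
  · exact hvb.trans_le (mul_le_mul_of_nonneg_right (le_max_right _ _) hb)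

/-- Joint tail equivalence under the multiplicative nugget: if the joint survival of
    (Xᵢ*, Xⱼ*) is regularly varying, P(Xᵢ* > x, Xⱼ* > x) = L(x)x^{-κ}, and the positive
    nuggets εᵢ, εⱼ are independent of (Xᵢ*, Xⱼ*) with finite (κ+δ)-moments of their min
    and max, then P(εᵢXᵢ* > x, εⱼXⱼ* > x) is bounded between
    E[min(εᵢ,εⱼ)^κ]·L(x)x^{-κ}(1+o(1)) and E[max(εᵢ,εⱼ)^κ]·L(x)x^{-κ}(1+o(1)),
    expressed via liminf/limsup of the ratio; hence the tail exponent κ is preserved. -/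
theorem stmt19 {Ω : Type*} [MeasureSpace Ω] [IsProbabilityMeasure (ℙ : Measure Ω)]
    (Xi Xj εi εj : Ω → ℝ)
    (hXim : Measurable Xi) (hXjm : Measurable Xj)
    (hεim : Measurable εi) (hεjm : Measurable εj)
    (hXinn : ∀ ω, 0 ≤ Xi ω) (hXjnn : ∀ ω, 0 ≤ Xj ω)
    (hεipos : ∀ ω, 0 < εi ω) (hεjpos : ∀ ω, 0 < εj ω)
    (hindep : IndepFun (fun ω => (εi ω, εj ω)) (fun ω => (Xi ω, Xj ω)) ℙ)
    (κ : ℝ) (hκ : 0 < κ) (L : ℝ → ℝ) (hLpos : ∀ x > 0, 0 < L x)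
    (hslow : ∀ t > 0, Tendsto (fun x => L (t * x) / L x) atTop (nhds 1))
    (hjoint : ∀ x > 0, (ℙ {ω | Xi ω > x ∧ Xj ω > x}).toReal = L x * x ^ (-κ))
    (δ : ℝ) (hδ : 0 < δ)
    (hminmom : Integrable (fun ω => min (εi ω) (εj ω) ^ (κ + δ)) ℙ)
    (hmaxmom : Integrable (fun ω => max (εi ω) (εj ω) ^ (κ + δ)) ℙ) :
    (∫ ω, min (εi ω) (εj ω) ^ κ ∂ℙ)
        ≤ Filter.liminf
            (fun x => (ℙ {ω | εi ω * Xi ω > x ∧ εj ω * Xj ω > x}).toReal / (L x * x ^ (-κ)))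
            atTop ∧
    Filter.limsup
        (fun x => (ℙ {ω | εi ω * Xi ω > x ∧ εj ω * Xj ω > x}).toReal / (L x * x ^ (-κ)))
        atTop
      ≤ ∫ ω, max (εi ω) (εj ω) ^ κ ∂ℙ := by
  have hYtail : ∀ x > 0, (ℙ : Measure Ω).real {ω | x < min (Xi ω) (Xj ω)} = L x * x ^ (-κ) := by
    simpa only [lt_min_iff, measureReal_def] using hjoint
  have hmin := tendsto_measureReal_lt_mul_div ℙ (hεim.min hεjm) (hXim.min hXjm)
    (fun ω => lt_min (hεipos ω) (hεjpos ω))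
    (hindep.comp (measurable_fst.min measurable_snd) (measurable_fst.min measurable_snd))
    hκ.le hδ hLpos hslow hYtail hminmom
  have hmax := tendsto_measureReal_lt_mul_div ℙ (hεim.max hεjm) (hXim.min hXjm)
    (fun ω => (hεipos ω).trans_le (le_max_left _ _))
    (hindep.comp (measurable_fst.max measurable_snd) (measurable_fst.min measurable_snd))
    hκ.le hδ hLpos hslow hYtail hmaxmom
  refine le_liminf_and_limsup_le_of_squeeze hmin hmax ?_ ?_ <;>
    filter_upwards [eventually_gt_atTop 0] with x hx <;>
    refine div_le_div_of_nonneg_right (measureReal_mono fun ω hω => ?_)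
      (mul_pos (hLpos x hx) (rpow_pos_of_pos hx _)).le
  · exact lt_mul_and_lt_mul_of_lt_min_mul_min (hεipos ω).le (hεjpos ω).le (hXinn ω) (hXjnn ω) hω
  · exact lt_max_mul_min_of_lt_mul_of_lt_mul (hXinn ω) (hXjnn ω) hω.1 hω.2
end
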